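/- arXiv:1502.02384 — 2 statements merged into one kernel-verified Lean document; each statement's English description precedes it below -/
import Mathlib

section
/- Let n ≥ 2 and b ≥ 1. Consider b-tuples (τ₁,…,τ_b) of transpositions in the symmetric group Equiv.Perm (Fin n) such that the product τ₁ * τ₂ * ⋯ * τ_b equals the identity permutation and the subgroup generated by {τ₁,…,τ_b} acts transitively on Fin n. Then any two such b-tuples are Hurwitz equivalent, i.e., one can be transformed into the other by a finite sequence of elementary Hurwitz moves and their inverses. -/
/-- The elementary Hurwitz move at (0-indexed) position `i` on a `b`-tuple in a group `G`:
the adjacent pair `(g i, g (i+1))` is replaced by `(g i * g (i+1) * (g i)⁻¹, g i)`,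
and all other entries are unchanged. -/
def IsHurwitzMoveAt {G : Type*} [Group G] {b : ℕ} (i : ℕ) (hi : i + 1 < b)
    (g g' : Fin b → G) : Prop :=
  g' ⟨i, Nat.lt_of_succ_lt hi⟩ =
      g ⟨i, Nat.lt_of_succ_lt hi⟩ * g ⟨i + 1, hi⟩ * (g ⟨i, Nat.lt_of_succ_lt hi⟩)⁻¹ ∧
  g' ⟨i + 1, hi⟩ = g ⟨i, Nat.lt_of_succ_lt hi⟩ ∧
  ∀ j : Fin b, (j : ℕ) ≠ i → (j : ℕ) ≠ i + 1 → g' j = g j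

/-- An elementary Hurwitz move at some position. -/
def IsHurwitzMove {G : Type*} [Group G] {b : ℕ} (g g' : Fin b → G) : Prop :=
  ∃ (i : ℕ) (hi : i + 1 < b), IsHurwitzMoveAt i hi g g'

/-- Hurwitz equivalence: two tuples are related by a finite sequence of elementary
Hurwitz moves and their inverses (the equivalence closure of `IsHurwitzMove`). -/
def HurwitzEquivalent {G : Type*} [Group G] {b : ℕ} (g g' : Fin b → G) : Prop :=
  Relation.EqvGen IsHurwitzMove g g'

namespace HurwitzProof

variable {G : Type*} [Group G] {H : Type*} [Group H]

/-- Elementary Hurwitz move on lists. -/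
inductive LM : List G → List G → Prop
  | head (x y : G) (t : List G) : LM (x :: y :: t) (x * y * x⁻¹ :: x :: t)
  | cons (a : G) {t t' : List G} : LM t t' → LM (a :: t) (a :: t')

def Heq (l l' : List G) : Prop := Relation.EqvGen LM l l'

lemma Heq.refl (l : List G) : Heq l l := Relation.EqvGen.refl l

lemma Heq.symm {l l' : List G} (h : Heq l l') : Heq l' l := Relation.EqvGen.symm _ _ h

lemma Heq.trans {l m l' : List G} (h : Heq l m) (h' : Heq m l') : Heq l l' :=
  Relation.EqvGen.trans _ _ _ h h'

lemma LM.heq {l l' : List G} (h : LM l l') : Heq l l' := Relation.EqvGen.rel _ _ h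

lemma Heq.cons (a : G) {t t' : List G} (h : Heq t t') : Heq (a :: t) (a :: t') := by
  induction h with
  | rel x y h => exact (LM.cons a h).heq
  | refl x => exact Heq.refl _
  | symm x y _ ih => exact ih.symm
  | trans x y z _ _ ih ih' => exact ih.trans ih'

lemma Heq.append_left (L : List G) {t t' : List G} (h : Heq t t') : Heq (L ++ t) (L ++ t') := by
  induction L with
  | nil => simpa using h
  | cons a L ih => simpa using ih.cons a

lemma LM.append_right {t t' : List G} (h : LM t t') (K : List G) : LM (t ++ K) (t' ++ K) := by
  induction h with
  | head x y s => exact LM.head x y (s ++ K)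
  | cons a _ ih => exact LM.cons a ih

lemma Heq.append_right {t t' : List G} (h : Heq t t') (K : List G) : Heq (t ++ K) (t' ++ K) := by
  induction h with
  | rel x y h => exact (h.append_right K).heq
  | refl x => exact Heq.refl _
  | symm x y _ ih => exact ih.symm
  | trans x y z _ _ ih ih' => exact ih.trans ih'

lemma heq_move (x y : G) (t : List G) : Heq (x :: y :: t) (x * y * x⁻¹ :: x :: t) :=
  (LM.head x y t).heq

/-- the moving entry goes left unchanged. -/
lemma heq_move' (a z : G) (t : List G) : Heq (a :: z :: t) (z :: (z⁻¹ * a * z) :: t) := by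
  have := (heq_move z (z⁻¹ * a * z) t).symm
  simpa [mul_assoc] using this

lemma LM.length {l l' : List G} (h : LM l l') : l.length = l'.length := by
  induction h with
  | head => simp
  | cons a _ ih => simp [ih]

lemma Heq.length {l l' : List G} (h : Heq l l') : l.length = l'.length := by
  induction h with
  | rel x y h => exact h.length
  | refl x => rfl
  | symm x y _ ih => exact ih.symm
  | trans x y z _ _ ih ih' => exact ih.trans ih'

lemma LM.prod {l l' : List G} (h : LM l l') : l.prod = l'.prod := by
  induction h with
  | head x y t => simp [mul_assoc]
  | cons a _ ih => simp [ih]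

lemma Heq.prod {l l' : List G} (h : Heq l l') : l.prod = l'.prod := by
  induction h with
  | rel x y h => exact h.prod
  | refl x => rfl
  | symm x y _ ih => exact ih.symm
  | trans x y z _ _ ih ih' => exact ih.trans ih'

/-- entries of a list, as a set -/
def ent (l : List G) : Set G := {g | g ∈ l}

lemma ent_cons (a : G) (t : List G) : ent (a :: t) = insert a (ent t) := by
  ext g; simp [ent]

lemma LM.closure {l l' : List G} (h : LM l l') :
    Subgroup.closure (ent l) = Subgroup.closure (ent l') := by
  induction h with
  | head x y t =>
      rw [ent_cons, ent_cons, ent_cons, ent_cons]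
      apply le_antisymm
      · rw [Subgroup.closure_le]
        intro g hg
        rcases hg with h | h | hg
        · subst h; exact Subgroup.subset_closure (by simp)
        · rw [h]
          have hx : x ∈ Subgroup.closure (insert (x*y*x⁻¹) (insert x (ent t))) :=
            Subgroup.subset_closure (by simp)
          have hxyx : x*y*x⁻¹ ∈ Subgroup.closure (insert (x*y*x⁻¹) (insert x (ent t))) :=
            Subgroup.subset_closure (by simp)
          have : x⁻¹ * (x*y*x⁻¹) * x ∈ _ := mul_mem (mul_mem (inv_mem hx) hxyx) hx
          simpa [mul_assoc] using this
        · exact Subgroup.subset_closure (by simp [hg])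
      · rw [Subgroup.closure_le]
        intro g hg
        rcases hg with h | h | hg
        · rw [h]
          have hx : x ∈ Subgroup.closure (insert x (insert y (ent t))) :=
            Subgroup.subset_closure (by simp)
          have hy : y ∈ Subgroup.closure (insert x (insert y (ent t))) :=
            Subgroup.subset_closure (by simp)
          exact mul_mem (mul_mem hx hy) (inv_mem hx)
        · subst h; exact Subgroup.subset_closure (by simp)
        · exact Subgroup.subset_closure (by simp [hg])
  | cons a t ih =>
      rw [ent_cons, ent_cons, Set.insert_eq, Set.insert_eq,
        Subgroup.closure_union, Subgroup.closure_union, ih]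

lemma Heq.closure {l l' : List G} (h : Heq l l') :
    Subgroup.closure (ent l) = Subgroup.closure (ent l') := by
  induction h with
  | rel x y h => exact h.closure
  | refl x => rfl
  | symm x y _ ih => exact ih.symm
  | trans x y z _ _ ih ih' => exact ih.trans ih'

lemma LM.map (f : G →* H) {l l' : List G} (h : LM l l') : LM (l.map f) (l'.map f) := by
  induction h with
  | head x y t =>
      have : f (x * y * x⁻¹) = f x * f y * (f x)⁻¹ := by simp
      simpa [this] using LM.head (f x) (f y) (t.map f)
  | cons a _ ih => exact LM.cons (f a) ih

lemma Heq.map (f : G →* H) {l l' : List G} (h : Heq l l') : Heq (l.map f) (l'.map f) := by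
  induction h with
  | rel x y h => exact (h.map f).heq
  | refl x => exact Heq.refl _
  | symm x y _ ih => exact ih.symm
  | trans x y z _ _ ih ih' => exact ih.trans ih'

/-- pairs of equal involutions commute with everything -/
lemma heq_pair_swap {x : G} (hx : x * x = 1) (z : G) (t : List G) :
    Heq (x :: x :: z :: t) (z :: x :: x :: t) := by
  have h1 : Heq (x :: x :: z :: t) (x :: (x * z * x⁻¹) :: x :: t) :=
    (heq_move x z t).cons x
  have h2 : Heq (x :: (x * z * x⁻¹) :: x :: t) ((x * (x * z * x⁻¹) * x⁻¹) :: x :: x :: t) :=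
    heq_move _ _ _
  have : x * (x * z * x⁻¹) * x⁻¹ = z := by
    have hinv : x⁻¹ = x := by
      rw [inv_eq_iff_mul_eq_one]; exact hx
    rw [hinv]
    calc x * (x * z * x) * x = (x * x) * z * (x * x) := by group
    _ = z := by rw [hx]; group
  rw [this] at h2
  exact h1.trans h2

/-- conjugate an adjacent involution pair by the entry in front of it -/
lemma heq_pair_conj_head {x : G} (hx : x * x = 1) (z : G) (t : List G) :
    Heq (x :: x :: z :: t) ((z * x * z⁻¹) :: (z * x * z⁻¹) :: z :: t) := by
  have h0 : Heq (x :: x :: z :: t) (z :: x :: x :: t) := heq_pair_swap hx z t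
  have h1 : Heq (z :: x :: x :: t) ((z * x * z⁻¹) :: z :: x :: t) := heq_move _ _ _
  have h2 : Heq ((z * x * z⁻¹) :: z :: x :: t) ((z * x * z⁻¹) :: (z * x * z⁻¹) :: z :: t) :=
    (heq_move z x t).cons _
  exact (h0.trans h1).trans h2

/-- rotate an entry to the front, conjugating the entries it jumps over -/
lemma heq_rotate (A : List G) (z : G) (B : List G) :
    Heq (A ++ z :: B) (z :: (A.map (fun a => z⁻¹ * a * z) ++ B)) := by
  induction A with
  | nil => simpa using Heq.refl _
  | cons a A ih =>
      have h1 : Heq (a :: (A ++ z :: B)) (a :: z :: (A.map (fun a => z⁻¹ * a * z) ++ B)) :=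
        ih.cons a
      have h2 := heq_move' a z (A.map (fun a => z⁻¹ * a * z) ++ B)
      simpa using h1.trans h2

/-- push an entry to the right past a block, conjugating the block -/
lemma heq_push (x : G) (Y t : List G) :
    Heq (x :: (Y ++ t)) (Y.map (fun y => x * y * x⁻¹) ++ x :: t) := by
  induction Y with
  | nil => simpa using Heq.refl _
  | cons y Y ih =>
      have h1 : Heq (x :: y :: (Y ++ t)) ((x * y * x⁻¹) :: x :: (Y ++ t)) := heq_move _ _ _
      exact h1.trans (by simpa using ih.cons (x * y * x⁻¹))

/-- conjugate an involution pair by any element of the closure of the remaining entries,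
leaving the tail unchanged. -/
lemma heq_conj_pair (T : List G) {w : G} (hw : w ∈ Subgroup.closure (ent T)) :
    ∀ x : G, x * x = 1 → Heq (x :: x :: T) ((w * x * w⁻¹) :: (w * x * w⁻¹) :: T) := by
  induction hw using Subgroup.closure_induction with
  | mem z hz =>
      intro x hx
      obtain ⟨A, B, rfl⟩ := List.append_of_mem hz
      have h1 : Heq (x :: x :: (A ++ z :: B))
          (x :: x :: (z :: (A.map (fun a => z⁻¹ * a * z) ++ B))) :=
        ((heq_rotate A z B).cons x).cons x
      have h2 := heq_pair_conj_head hx z (A.map (fun a => z⁻¹ * a * z) ++ B)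
      have h3 : Heq ((z*x*z⁻¹) :: (z*x*z⁻¹) :: z :: (A.map (fun a => z⁻¹ * a * z) ++ B))
          ((z*x*z⁻¹) :: (z*x*z⁻¹) :: (A ++ z :: B)) :=
        ((heq_rotate A z B).symm.cons _).cons _
      exact (h1.trans h2).trans h3
  | one => intro x hx; simpa using Heq.refl _
  | mul u v _ _ pu pv =>
      intro x hx
      have hvx : (v * x * v⁻¹) * (v * x * v⁻¹) = 1 := by
        calc (v * x * v⁻¹) * (v * x * v⁻¹) = v * (x * x) * v⁻¹ := by group
        _ = 1 := by rw [hx]; group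
      have h1 := pv x hx
      have h2 := pu (v * x * v⁻¹) hvx
      have : u * (v * x * v⁻¹) * u⁻¹ = (u * v) * x * (u * v)⁻¹ := by group
      rw [this] at h2
      exact h1.trans h2
  | inv u _ pu =>
      intro x hx
      have hux : (u⁻¹ * x * u) * (u⁻¹ * x * u) = 1 := by
        calc (u⁻¹ * x * u) * (u⁻¹ * x * u) = u⁻¹ * (x * x) * u := by group
        _ = 1 := by rw [hx]; group
      have h2 := pu (u⁻¹ * x * u) hux
      have : u * (u⁻¹ * x * u) * u⁻¹ = x := by group
      rw [this] at h2
      have : u⁻¹ * x * u = u⁻¹ * x * u⁻¹⁻¹ := by group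
      rw [this] at h2
      exact h2.symm

/-- a list is constant or has two distinct adjacent entries -/
lemma rep_or_adj {beta : Type*} (Y : List beta) :
    (∀ u ∈ Y, ∀ v ∈ Y, u = v) ∨ ∃ A u v B, Y = A ++ u :: v :: B ∧ u ≠ v := by
  induction Y with
  | nil => exact Or.inl (by simp)
  | cons y t ih =>
      match t, ih with
      | [], _ => exact Or.inl (by simp)
      | z :: t, ih =>
          by_cases hyz : y = z
          · rcases ih with h | ⟨A, u, v, B, hAB, huv⟩
            · left
              subst hyz
              intro u hu v hv
              rcases List.mem_cons.1 hu with rfl | hu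
              · rcases List.mem_cons.1 hv with rfl | hv
                · rfl
                · exact h u (by simp) v hv
              · rcases List.mem_cons.1 hv with rfl | hv
                · exact h u hu v (by simp)
                · exact h u hu v hv
            · exact Or.inr ⟨y :: A, u, v, B, by simp [hAB], huv⟩
          · exact Or.inr ⟨[], y, z, t, rfl, hyz⟩

section Perm

open Equiv Equiv.Perm

variable {α : Type} [Fintype α] [DecidableEq α]

/-- subgroup of permutations preserving a set -/
def invSub (U : Set α) : Subgroup (Perm α) where
  carrier := {σ | ∀ u ∈ U, σ u ∈ U ∧ σ⁻¹ u ∈ U}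
  one_mem' := by intro u hu; simpa using hu
  mul_mem' := by
    intro a b ha hb u hu
    constructor
    · have := (ha _ (hb u hu).1).1
      simpa [Equiv.Perm.mul_apply] using this
    · have := (hb _ (ha u hu).2).2
      simpa [Equiv.Perm.mul_apply] using this
  inv_mem' := by
    intro a ha u hu
    refine ⟨(ha u hu).2, ?_⟩
    simpa using (ha u hu).1

lemma mem_invSub {U : Set α} {σ : Perm α} :
    σ ∈ invSub U ↔ ∀ u ∈ U, σ u ∈ U ∧ σ⁻¹ u ∈ U := Iff.rfl

lemma mem_ent {l : List (Perm α)} {g : Perm α} : g ∈ ent l ↔ g ∈ l := Iff.rfl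

lemma closure_fix {s : Set (Perm α)} {Q : α} (h : ∀ z ∈ s, z Q = Q) :
    ∀ w ∈ Subgroup.closure s, w Q = Q := by
  intro w hw
  have hle : Subgroup.closure s ≤ invSub {Q} := by
    rw [Subgroup.closure_le]
    intro z hz u hu
    rcases hu with rfl
    constructor
    · simp [h z hz]
    · have : z⁻¹ (z u) = u := by simp
      rw [h z hz] at this
      simp [this]
  have := ((hle hw) Q rfl).1
  simpa using this

lemma isSwap_moving {σ : Perm α} (h : σ.IsSwap) {P : α} (hP : σ P ≠ P) :
    ∃ a, a ≠ P ∧ σ = Equiv.swap a P := by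
  obtain ⟨u, v, huv, rfl⟩ := h
  by_cases hu : P = u
  · subst hu
    exact ⟨v, fun hv => huv hv.symm, by rw [Equiv.swap_comm]⟩
  · by_cases hv : P = v
    · subst hv
      exact ⟨u, fun h' => hu h'.symm, rfl⟩
    · exact absurd (Equiv.swap_apply_of_ne_of_ne hu hv) hP

lemma swap_conj (σ : Perm α) (a b : α) :
    σ * Equiv.swap a b * σ⁻¹ = Equiv.swap (σ a) (σ b) :=
  (Equiv.swap_apply_apply σ a b).symm

lemma conj_isSwap {σ τ : Perm α} (h : τ.IsSwap) : (σ * τ * σ⁻¹).IsSwap := by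
  obtain ⟨u, v, huv, rfl⟩ := h
  rw [swap_conj]
  exact ⟨σ u, σ v, fun he => huv (σ.injective he), rfl⟩

/-- sorting: all `P`-moving entries to the front -/
lemma sort (P : α) : ∀ l : List (Perm α), (∀ x ∈ l, x.IsSwap) →
    ∃ Y Z : List (Perm α),
      Heq l (Y ++ Z) ∧ (∀ y ∈ Y, y.IsSwap ∧ y P ≠ P) ∧ (∀ z ∈ Z, z.IsSwap ∧ z P = P) ∧
      Y.length = l.countP (fun σ => decide (σ P ≠ P)) := by
  intro l
  induction l with
  | nil => exact fun _ => ⟨[], [], Heq.refl _, by simp, by simp, by simp⟩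
  | cons x t ih =>
      intro hsw
      obtain ⟨Y, Z, hheq, hY, hZ, hlen⟩ := ih (fun a ha => hsw a (List.mem_cons_of_mem _ ha))
      have hx : x.IsSwap := hsw x List.mem_cons_self
      by_cases hxP : x P = P
      · refine ⟨Y.map (fun y => x * y * x⁻¹), x :: Z, ?_, ?_, ?_, ?_⟩
        · have h1 : Heq (x :: t) (x :: (Y ++ Z)) := hheq.cons x
          exact h1.trans (heq_push x Y Z)
        · intro y' hy'
          obtain ⟨y, hy, rfl⟩ := List.mem_map.1 hy'
          refine ⟨conj_isSwap (hY y hy).1, ?_⟩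
          have hxinv : x⁻¹ P = P := by
            apply x.injective
            simp [hxP]
          have h1 : (x * y * x⁻¹) P = x (y P) := by
            simp [Equiv.Perm.mul_apply, hxinv]
          rw [h1]
          intro hc
          exact (hY y hy).2 (x.injective (hc.trans hxP.symm))
        · intro z hz
          rcases List.mem_cons.1 hz with rfl | hz
          · exact ⟨hx, hxP⟩
          · exact hZ z hz
        · simp [List.countP_cons, hxP, hlen]
      · refine ⟨x :: Y, Z, ?_, ?_, hZ, ?_⟩
        · simpa using hheq.cons x
        · intro y hy
          rcases List.mem_cons.1 hy with rfl | hy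
          · exact ⟨hx, hxP⟩
          · exact hY y hy
        · simp [List.countP_cons, hxP, hlen]

lemma exists_ne_ne (h3 : 3 ≤ Fintype.card α) (a b : α) : ∃ c, c ≠ a ∧ c ≠ b := by
  by_contra hcon
  push_neg at hcon
  have hsub : (Finset.univ : Finset α) ⊆ {a, b} := by
    intro c _
    by_cases hc : c = a
    · simp [hc]
    · simp [hcon c hc]
  have h1 := Finset.card_le_card hsub
  have h2 : ({a, b} : Finset α).card ≤ 2 :=
    (Finset.card_insert_le _ _).trans (by simp)
  rw [Finset.card_univ] at h1
  omega

/-- the tail of a standard pair-form tuple generates transitively away from `P` -/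
lemma compl_trans {P a : α} (ha : a ≠ P) (L : List (Perm α)) (hfix : ∀ z ∈ L, z P = P)
    (htr : ∀ u v : α,
      ∃ σ ∈ Subgroup.closure (ent (Equiv.swap a P :: Equiv.swap a P :: L)), σ u = v) :
    ∀ u v : α, u ≠ P → v ≠ P → ∃ w ∈ Subgroup.closure (ent L), w u = v := by
  set Hc := Subgroup.closure (ent L) with hHc
  have hfixH : ∀ w ∈ Hc, w P = P := closure_fix (fun z hz => hfix z hz)
  set U : Set α := {v | v = P ∨ ∃ w ∈ Hc, w a = v} with hU
  have hUP : P ∈ U := Or.inl rfl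
  have hUa : a ∈ U := Or.inr ⟨1, one_mem _, rfl⟩
  have hswapU : ∀ u ∈ U, Equiv.swap a P u ∈ U := by
    intro u hu
    rcases hu with rfl | ⟨w, hw, rfl⟩
    · simpa [Equiv.swap_apply_right] using hUa
    · by_cases hwa : w a = a
      · rw [hwa, Equiv.swap_apply_left]; exact hUP
      · have hwP : w a ≠ P := by
          intro hc
          exact ha (w.injective (hc.trans (hfixH w hw).symm))
        rw [Equiv.swap_apply_of_ne_of_ne hwa hwP]
        exact Or.inr ⟨w, hw, rfl⟩
  have key : Subgroup.closure (ent (Equiv.swap a P :: Equiv.swap a P :: L)) ≤ invSub U := by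
    rw [Subgroup.closure_le]
    intro g hg
    rw [ent_cons, ent_cons] at hg
    rcases hg with rfl | h | hgL
    · intro u hu
      refine ⟨hswapU u hu, ?_⟩
      rw [Equiv.swap_inv]
      exact hswapU u hu
    · rw [h]
      intro u hu
      refine ⟨hswapU u hu, ?_⟩
      rw [Equiv.swap_inv]
      exact hswapU u hu
    · have hgH : g ∈ Hc := Subgroup.subset_closure hgL
      intro u hu
      constructor
      · rcases hu with h | ⟨w, hw, rfl⟩
        · rw [h]
          exact Or.inl (hfix g hgL)
        · exact Or.inr ⟨g * w, mul_mem hgH hw, by simp [Equiv.Perm.mul_apply]⟩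
      · rcases hu with h | ⟨w, hw, rfl⟩
        · rw [h]
          left
          have h2 : g⁻¹ (g P) = P := by simp
          rw [hfix g hgL] at h2
          exact h2
        · exact Or.inr ⟨g⁻¹ * w, mul_mem (inv_mem hgH) hw, by simp [Equiv.Perm.mul_apply]⟩
  have hmemU : ∀ u : α, u ∈ U := by
    intro u
    obtain ⟨σ, hσ, hσa⟩ := htr a u
    have := ((key hσ) a hUa).1
    rwa [hσa] at this
  intro u v hu hv
  rcases hmemU u with rfl | ⟨wu, hwu, hwua⟩
  · exact absurd rfl hu
  rcases hmemU v with rfl | ⟨wv, hwv, hwva⟩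
  · exact absurd rfl hv
  refine ⟨wv * wu⁻¹, mul_mem hwv (inv_mem hwu), ?_⟩
  have h1 : wu⁻¹ (wu a) = a := by simp
  rw [← hwua, Equiv.Perm.mul_apply, h1, hwva]

lemma Heq.transfer {l l' : List (Perm α)} (h : Heq l l')
    (htr : ∀ u v : α, ∃ σ ∈ Subgroup.closure (ent l), σ u = v) :
    ∀ u v : α, ∃ σ ∈ Subgroup.closure (ent l'), σ u = v := by
  intro u v
  obtain ⟨σ, hσ, hσuv⟩ := htr u v
  exact ⟨σ, h.closure ▸ hσ, hσuv⟩

lemma prod_fix {P : α} : ∀ {Z : List (Perm α)}, (∀ z ∈ Z, z P = P) → Z.prod P = P := by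
  intro Z
  induction Z with
  | nil => intro _; simp
  | cons z t ih =>
      intro h
      rw [List.prod_cons, Equiv.Perm.mul_apply, ih (fun x hx => h x (List.mem_cons_of_mem _ hx)),
        h z List.mem_cons_self]

lemma inv_fix {P : α} {σ : Perm α} (h : σ P = P) : σ⁻¹ P = P := by
  have h2 : σ⁻¹ (σ P) = P := by simp
  rwa [h] at h2

lemma pow_invol {x : G} (hx : x * x = 1) : ∀ k : ℕ, x ^ k = if k % 2 = 0 then 1 else x := by
  intro k
  induction k with
  | zero => simp
  | succ n ih =>
      rw [pow_succ, ih]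
      by_cases h : n % 2 = 0
      · have h2 : (n + 1) % 2 ≠ 0 := by omega
        simp [h, h2]
      · have h2 : (n + 1) % 2 = 0 := by omega
        simp [h, h2, hx]

/-- The core reduction: an admissible tuple is equivalent to one starting with a doubled
swap involving `P`, with the rest fixing `P`. -/
lemma core (P : α) (hcard : 3 ≤ Fintype.card α) :
    ∀ k : ℕ, ∀ l : List (Perm α), (∀ x ∈ l, x.IsSwap) → l.prod = 1 →
      (∀ u v : α, ∃ σ ∈ Subgroup.closure (ent l), σ u = v) →
      l.countP (fun σ => decide (σ P ≠ P)) = k →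
      ∃ a, ∃ L : List (Perm α), a ≠ P ∧ Heq l (Equiv.swap a P :: Equiv.swap a P :: L) ∧
        ∀ z ∈ L, z.IsSwap ∧ z P = P := by
  intro k
  induction k using Nat.strong_induction_on with
  | _ k IH =>
  intro l hsw hprod htr hcount
  obtain ⟨Y, Z, hheq, hY, hZ, hlen⟩ := sort P l hsw
  have hkY : Y.length = k := hlen.trans hcount
  -- k ≥ 1
  have hk1 : 1 ≤ k := by
    rcases Nat.eq_zero_or_pos k with hk | hk
    · exfalso
      have hallfix : ∀ x ∈ l, x P = P := by
        intro x hx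
        by_contra hxP
        have hpos : 0 < l.countP (fun σ => decide (σ P ≠ P)) :=
          List.countP_pos_iff.2 ⟨x, hx, by simpa using hxP⟩
        omega
      obtain ⟨Q, hQ⟩ := Fintype.exists_ne_of_one_lt_card (by omega) P
      obtain ⟨σ, hσ, hσP⟩ := htr P Q
      have hfix := closure_fix (s := ent l) (fun z hz => hallfix z hz) σ hσ
      rw [hfix] at hσP
      exact hQ hσP.symm
    · exact hk
  have hYswapP : ∀ y ∈ Y, ∃ a, a ≠ P ∧ y = Equiv.swap a P :=
    fun y hy => isSwap_moving (hY y hy).1 (hY y hy).2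
  have hswYZ : ∀ x ∈ Y ++ Z, x.IsSwap := by
    intro x hx
    rcases List.mem_append.1 hx with h | h
    · exact (hY x h).1
    · exact (hZ x h).1
  have hZcount : Z.countP (fun σ => decide (σ P ≠ P)) = 0 := by
    rw [List.countP_eq_zero]
    intro z hz
    simpa using (hZ z hz).2
  rcases rep_or_adj Y with hconst | ⟨A, u, v, B, hYdec, huv⟩
  · -- constant case
    have hYne : Y ≠ [] := by
      intro h
      rw [h] at hkY
      simp at hkY
      omega
    obtain ⟨y₀, hy₀⟩ := List.exists_mem_of_ne_nil Y hYne
    obtain ⟨a, haP, hy₀a⟩ := hYswapP y₀ hy₀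
    have hYrep : Y = List.replicate k (Equiv.swap a P) := by
      rw [List.eq_replicate_iff]
      exact ⟨hkY, fun b hb => (hconst b hb y₀ hy₀).trans hy₀a⟩
    have hZfixP : Z.prod P = P := prod_fix (fun z hz => (hZ z hz).2)
    have hprodYZ : (Y ++ Z).prod = 1 := hheq.prod ▸ hprod
    rw [hYrep, List.prod_append, List.prod_replicate] at hprodYZ
    have hxx : Equiv.swap a P * Equiv.swap a P = 1 := Equiv.swap_mul_self a P
    have hkeven : k % 2 = 0 := by
      by_contra hodd
      have hpow : Equiv.swap a P ^ k = Equiv.swap a P := by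
        rw [pow_invol hxx k, if_neg hodd]
      rw [hpow] at hprodYZ
      have hsP : Equiv.swap a P = Z.prod⁻¹ := by
        rw [eq_inv_iff_mul_eq_one]
        exact hprodYZ
      have hav : Equiv.swap a P P = P := by
        rw [hsP]
        exact inv_fix hZfixP
      rw [Equiv.swap_apply_right] at hav
      exact haP hav
    by_cases hk2 : k = 2
    · refine ⟨a, Z, haP, ?_, hZ⟩
      have hsplit2 : Y ++ Z = Equiv.swap a P :: Equiv.swap a P :: Z := by
        rw [hYrep, hk2]
        simp [List.replicate_succ]
      exact hsplit2 ▸ hheq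
    · -- k ≥ 4
      obtain ⟨m, hm⟩ : ∃ m, k = m + 2 := ⟨k - 2, by omega⟩
      have hm1 : 1 ≤ m := by omega
      set x := Equiv.swap a P with hxdef
      set T := List.replicate m x ++ Z with hTdef
      have hsplitY : Y ++ Z = x :: x :: T := by
        rw [hYrep, hm, hTdef]
        simp [List.replicate_succ]
      have hw : ∃ w ∈ Subgroup.closure (ent Z), w a ≠ a := by
        by_contra hcon
        push_neg at hcon
        have key : Subgroup.closure (ent (Y ++ Z)) ≤ invSub {a, P} := by
          rw [Subgroup.closure_le]
          intro g hg
          have hg' : g ∈ Y ++ Z := hg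
          rcases List.mem_append.1 hg' with h | h
          · have hgx : g = Equiv.swap a P := (hconst g h y₀ hy₀).trans hy₀a
            rw [hgx]
            intro u hu
            rw [Equiv.swap_inv]
            simp only [Set.mem_insert_iff, Set.mem_singleton_iff] at hu
            constructor <;>
            · rcases hu with h1 | h1
              · rw [h1, Equiv.swap_apply_left]; simp
              · rw [h1, Equiv.swap_apply_right]; simp
          · intro u hu
            have hga : g a = a := hcon g (Subgroup.subset_closure h)
            have hgia : g⁻¹ a = a := hcon g⁻¹ (inv_mem (Subgroup.subset_closure h))
            have hgP : g P = P := (hZ g h).2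
            have hgiP : g⁻¹ P = P := inv_fix hgP
            simp only [Set.mem_insert_iff, Set.mem_singleton_iff] at hu
            rcases hu with h1 | h1
            · rw [h1]
              exact ⟨by rw [hga]; simp, by rw [hgia]; simp⟩
            · rw [h1]
              exact ⟨by rw [hgP]; simp, by rw [hgiP]; simp⟩
        obtain ⟨q, hqa, hqP⟩ := exists_ne_ne hcard a P
        obtain ⟨σ, hσ, hσq⟩ := htr a q
        have hσ' : σ ∈ Subgroup.closure (ent (Y ++ Z)) := hheq.closure ▸ hσ
        have hmem := ((key hσ') a (by simp)).1
        rw [hσq] at hmem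
        simp only [Set.mem_insert_iff, Set.mem_singleton_iff] at hmem
        rcases hmem with h1 | h1
        · exact hqa h1
        · exact hqP h1
      obtain ⟨w, hwZ, hwa⟩ := hw
      have hZT : ent Z ⊆ ent T := by
        intro g hg
        have : g ∈ Z := hg
        rw [hTdef]
        exact List.mem_append_right _ this
      have hwT : w ∈ Subgroup.closure (ent T) := Subgroup.closure_mono hZT hwZ
      have hwP : w P = P := closure_fix (fun z hz => (hZ z hz).2) w hwZ
      have hxx : x * x = 1 := Equiv.swap_mul_self a P
      set c := w a with hcdef
      have hcP : c ≠ P := fun h => haP (w.injective (h.trans hwP.symm))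
      have hca : c ≠ a := hwa
      set s := Equiv.swap c P with hsdef
      have hwxw : w * x * w⁻¹ = s := by
        rw [hxdef, swap_conj, hwP]
      have hconjpair : Heq (x :: x :: T) (s :: s :: T) := by
        have h0 := heq_conj_pair T hwT x hxx
        rwa [hwxw] at h0
      have hTsplit : T = x :: (List.replicate (m-1) x ++ Z) := by
        rw [hTdef]
        have hmm : m = (m-1) + 1 := by omega
        rw [hmm, List.replicate_succ]
        simp
      have hsx : s * x * s⁻¹ = Equiv.swap a c := by
        rw [hsdef, hxdef, swap_conj,
          Equiv.swap_apply_of_ne_of_ne (fun h => hca h.symm) haP, Equiv.swap_apply_right]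
      have hmerge : Heq (s :: s :: T)
          (s :: Equiv.swap a c :: s :: (List.replicate (m-1) x ++ Z)) := by
        rw [hTsplit]
        have h0 := heq_move s x (List.replicate (m-1) x ++ Z)
        rw [hsx] at h0
        exact h0.cons s
      set l₂ := s :: Equiv.swap a c :: s :: (List.replicate (m-1) x ++ Z) with hl₂
      have hstep : Heq l l₂ := by
        refine hheq.trans ?_
        rw [hsplitY]
        exact hconjpair.trans hmerge
      have hsPm : s P ≠ P := by
        rw [hsdef, Equiv.swap_apply_right]
        exact hcP
      have hacfix : Equiv.swap a c P = P :=
        Equiv.swap_apply_of_ne_of_ne (Ne.symm haP) (Ne.symm hcP)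
      have hxPm : x P ≠ P := by
        rw [hxdef, Equiv.swap_apply_right]
        exact haP
      have hcount₂ : l₂.countP (fun σ => decide (σ P ≠ P)) = k - 1 := by
        have hrep : (List.replicate (m-1) x).countP (fun σ => decide (σ P ≠ P)) = m - 1 := by
          rw [List.countP_eq_length.2 (fun y hy => by
            rw [List.eq_of_mem_replicate hy]; simpa using hxPm)]
          simp
        rw [hl₂, List.countP_cons, List.countP_cons, List.countP_cons, List.countP_append,
          hrep, hZcount]
        simp [hsPm, hacfix]
        omega
      have hsw₂ : ∀ g ∈ l₂, g.IsSwap := by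
        intro g hg
        rw [hl₂] at hg
        rcases List.mem_cons.1 hg with rfl | hg
        · exact ⟨c, P, hcP, hsdef⟩
        rcases List.mem_cons.1 hg with rfl | hg
        · exact ⟨a, c, fun h => hca h.symm, rfl⟩
        rcases List.mem_cons.1 hg with rfl | hg
        · exact ⟨c, P, hcP, hsdef⟩
        rcases List.mem_append.1 hg with h | h
        · rw [List.eq_of_mem_replicate h]
          exact ⟨a, P, haP, hxdef⟩
        · exact (hZ g h).1
      have hprod₂ : l₂.prod = 1 := hstep.prod ▸ hprod
      have htr₂ := hstep.transfer htr
      obtain ⟨a₂, L, ha₂, hheq₂, hL⟩ := IH (k-1) (by omega) l₂ hsw₂ hprod₂ htr₂ hcount₂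
      exact ⟨a₂, L, ha₂, hstep.trans hheq₂, hL⟩
  · -- adjacent distinct case
    obtain ⟨a, haP, hua⟩ := hYswapP u (by rw [hYdec]; simp)
    obtain ⟨c, hcP, hvc⟩ := hYswapP v (by rw [hYdec]; simp)
    have hac : a ≠ c := by
      intro h
      apply huv
      rw [hua, hvc, h]
    have hsplit : Y ++ Z = A ++ (u :: v :: (B ++ Z)) := by simp [hYdec]
    have hconj : u * v * u⁻¹ = Equiv.swap c a := by
      rw [hua, hvc, swap_conj,
        Equiv.swap_apply_of_ne_of_ne (fun h => hac h.symm) hcP, Equiv.swap_apply_right]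
    have hmv : Heq (u :: v :: (B ++ Z)) (Equiv.swap c a :: u :: (B ++ Z)) :=
      hconj ▸ heq_move u v (B ++ Z)
    have hstep : Heq l (A ++ (Equiv.swap c a :: u :: (B ++ Z))) := by
      refine hheq.trans ?_
      rw [hsplit]
      exact hmv.append_left A
    set l₁ := A ++ (Equiv.swap c a :: u :: (B ++ Z)) with hl₁
    have hAY : ∀ x ∈ A, x ∈ Y := by intro x hx; rw [hYdec]; simp [hx]
    have hBY : ∀ x ∈ B, x ∈ Y := by intro x hx; rw [hYdec]; simp [hx]
    have hsw₁ : ∀ x ∈ l₁, x.IsSwap := by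
      intro x hx
      rw [hl₁] at hx
      rcases List.mem_append.1 hx with h | h
      · exact (hY x (hAY x h)).1
      · rcases List.mem_cons.1 h with rfl | h
        · exact ⟨c, a, fun h => hac h.symm, rfl⟩
        · rcases List.mem_cons.1 h with rfl | h
          · exact (hY _ (by rw [hYdec]; simp)).1
          · rcases List.mem_append.1 h with h | h
            · exact (hY x (hBY x h)).1
            · exact (hZ x h).1
    have hprod₁ : l₁.prod = 1 := hstep.prod ▸ hprod
    have htr₁ := hstep.transfer htr
    have hcount₁ : l₁.countP (fun σ => decide (σ P ≠ P)) = k - 1 := by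
      have hA : A.countP (fun σ => decide (σ P ≠ P)) = A.length :=
        List.countP_eq_length.2 (fun y hy => by simpa using (hY y (hAY y hy)).2)
      have hB : B.countP (fun σ => decide (σ P ≠ P)) = B.length :=
        List.countP_eq_length.2 (fun y hy => by simpa using (hY y (hBY y hy)).2)
      have hca : Equiv.swap c a P = P :=
        Equiv.swap_apply_of_ne_of_ne (fun h => hcP h.symm) (fun h => haP h.symm)
      have huP : u P ≠ P := (hY u (by rw [hYdec]; simp)).2
      have hklen : A.length + B.length + 2 = k := by
        rw [hYdec] at hkY
        simp [List.length_append] at hkY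
        omega
      rw [hl₁, List.countP_append, List.countP_cons, List.countP_cons, List.countP_append,
        hA, hB, hZcount]
      simp [hca, huP]
      omega
    obtain ⟨a₂, L, ha₂, hheq₂, hL⟩ :=
      IH (k - 1) (by omega) l₁ hsw₁ hprod₁ htr₁ hcount₁
    exact ⟨a₂, L, ha₂, hstep.trans hheq₂, hL⟩

lemma three_le {x y z : α} (hxy : x ≠ y) (hxz : x ≠ z) (hyz : y ≠ z) :
    3 ≤ Fintype.card α := by
  have h1 : ({x, y, z} : Finset α).card = 3 := by
    rw [Finset.card_insert_of_notMem (by simp [hxy, hxz]),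
      Finset.card_insert_of_notMem (by simp [hyz]), Finset.card_singleton]
  rw [← h1, ← Finset.card_univ]
  exact Finset.card_le_card (Finset.subset_univ _)

lemma swap_unique (h2 : Fintype.card α = 2) {σ τ : Perm α} (hσ : σ.IsSwap) (hτ : τ.IsSwap) :
    σ = τ := by
  have hmove : ∀ ρ : Perm α, ρ.IsSwap → ∀ x : α, ρ x ≠ x := by
    rintro ρ ⟨u, v, huv, rfl⟩ x
    by_cases hxu : x = u
    · rw [hxu, Equiv.swap_apply_left]
      exact fun h => huv h.symm
    · by_cases hxv : x = v
      · rw [hxv, Equiv.swap_apply_right]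
        exact huv
      · exfalso
        have := three_le hxu hxv huv
        omega
  ext x
  by_contra hne
  have h1 : σ x ≠ x := hmove σ hσ x
  have h2' : τ x ≠ x := hmove τ hτ x
  have := three_le hne h1 h2'
  omega

variable (P : α)

lemma fixiff {σ : Perm α} (hσ : σ P = P) : ∀ x, σ x ≠ P ↔ x ≠ P := by
  intro x
  constructor
  · intro hx hc
    exact hx (by rw [hc, hσ])
  · intro hx hc
    exact hx (σ.injective (hc.trans hσ.symm))

/-- restriction of a list of `P`-fixing permutations to the complement of `P` -/
def res (L : List (Perm α)) (h : ∀ z ∈ L, z P = P) : List (Perm {x : α // x ≠ P}) :=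
  L.pmap (fun σ hσ => σ.subtypePerm (fixiff P hσ)) h

lemma ofSubtype_res {σ : Perm α} (hσ : σ P = P) :
    Equiv.Perm.ofSubtype (σ.subtypePerm (p := fun x => x ≠ P) (fixiff P hσ)) = σ := by
  apply Equiv.Perm.ofSubtype_subtypePerm
  intro x hx
  intro hc
  rw [hc, hσ] at hx
  exact hx rfl

lemma map_ofSubtype_res : ∀ (L : List (Perm α)) (h : ∀ z ∈ L, z P = P),
    (res P L h).map (Equiv.Perm.ofSubtype : Perm {x : α // x ≠ P} →* Perm α) = L := by
  intro L
  induction L with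
  | nil => intro h; simp [res]
  | cons z t ih =>
      intro h
      have ht := ih (fun x hx => h x (List.mem_cons_of_mem _ hx))
      simp only [res, List.pmap, List.map_cons] at ht ⊢
      rw [ht, ofSubtype_res P (h z List.mem_cons_self)]

lemma ofSubtype_injective {p : α → Prop} [DecidablePred p] {f g : Equiv.Perm (Subtype p)}
    (h : Equiv.Perm.ofSubtype f = Equiv.Perm.ofSubtype g) : f = g := by
  ext x
  have h1 := Equiv.Perm.ofSubtype_apply_coe f x
  have h2 := Equiv.Perm.ofSubtype_apply_coe g x
  rw [h] at h1
  exact h1.symm.trans h2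

lemma res_isSwap {σ : Perm α} (hσfix : σ P = P) (hσ : σ.IsSwap) :
    (σ.subtypePerm (p := fun x => x ≠ P) (fixiff P hσfix)).IsSwap := by
  obtain ⟨u, v, huv, rfl⟩ := hσ
  have huP : u ≠ P := by
    intro h
    rw [h] at huv hσfix
    rw [Equiv.swap_apply_left] at hσfix
    exact huv hσfix.symm
  have hvP : v ≠ P := by
    intro h
    rw [h] at huv hσfix
    rw [Equiv.swap_apply_right] at hσfix
    exact huv hσfix
  refine ⟨⟨u, huP⟩, ⟨v, hvP⟩, fun h => huv (congrArg Subtype.val h), ?_⟩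
  ext x
  simp only [Equiv.Perm.subtypePerm_apply]
  by_cases hxu : (x : α) = u
  · have e : x = (⟨u, huP⟩ : {y : α // y ≠ P}) := Subtype.ext hxu
    rw [e]
    simp [Equiv.swap_apply_left]
  · by_cases hxv : (x : α) = v
    · have e : x = (⟨v, hvP⟩ : {y : α // y ≠ P}) := Subtype.ext hxv
      rw [e]
      simp [Equiv.swap_apply_right]
    · have e1 : x ≠ (⟨u, huP⟩ : {y : α // y ≠ P}) := fun h => hxu (congrArg Subtype.val h)
      have e2 : x ≠ (⟨v, hvP⟩ : {y : α // y ≠ P}) := fun h => hxv (congrArg Subtype.val h)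
      rw [Equiv.swap_apply_of_ne_of_ne e1 e2, Equiv.swap_apply_of_ne_of_ne hxu hxv]

lemma card_compl_point : Fintype.card {x : α // x ≠ P} = Fintype.card α - 1 := by
  have h := Fintype.card_subtype_compl (fun x : α => x = P)
  simpa [Fintype.card_subtype_eq] using h

lemma prod_res {L : List (Perm α)} (hfix : ∀ z ∈ L, z P = P) (h1 : L.prod = 1) :
    (res P L hfix).prod = 1 := by
  apply ofSubtype_injective (p := fun x : α => x ≠ P)
  have h2 := List.prod_hom (res P L hfix)
    (Equiv.Perm.ofSubtype : Perm {x : α // x ≠ P} →* Perm α)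
  rw [map_ofSubtype_res] at h2
  rw [← h2, h1, map_one]

lemma trans_res {L : List (Perm α)} (hfix : ∀ z ∈ L, z P = P)
    (htr : ∀ u v : α, u ≠ P → v ≠ P → ∃ w ∈ Subgroup.closure (ent L), w u = v) :
    ∀ u v : {x : α // x ≠ P},
      ∃ w ∈ Subgroup.closure (ent (res P L hfix)), w u = v := by
  intro u v
  obtain ⟨w, hw, hwv⟩ := htr u.1 v.1 u.2 v.2
  have hentL : ent L =
      (Equiv.Perm.ofSubtype : Perm {x : α // x ≠ P} →* Perm α) '' ent (res P L hfix) := by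
    conv_lhs => rw [← map_ofSubtype_res P L hfix]
    ext g
    simp only [ent, List.mem_map, Set.mem_image, Set.mem_setOf_eq]
  rw [hentL, ← MonoidHom.map_closure] at hw
  obtain ⟨w', hw', rfl⟩ := Subgroup.mem_map.1 hw
  refine ⟨w', hw', ?_⟩
  apply Subtype.ext
  have happ := Equiv.Perm.ofSubtype_apply_of_mem w' u.2
  rw [Subtype.coe_eta] at happ
  rw [← happ]
  exact hwv

/-- Main theorem on lists: any two admissible lists of equal length are Hurwitz equivalent. -/
lemma main : ∀ M : ℕ, ∀ (β : Type) (_ : Fintype β) (_ : DecidableEq β),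
    Fintype.card β = M → 2 ≤ M → ∀ l l' : List (Perm β), l.length = l'.length →
    (∀ x ∈ l, x.IsSwap) → l.prod = 1 →
    (∀ u v : β, ∃ σ ∈ Subgroup.closure (ent l), σ u = v) →
    (∀ x ∈ l', x.IsSwap) → l'.prod = 1 →
    (∀ u v : β, ∃ σ ∈ Subgroup.closure (ent l'), σ u = v) →
    Heq l l' := by
  intro M
  induction M using Nat.strong_induction_on with
  | _ M IH =>
  intro β _ _ hcard hM l l' hlen hsw hprod htr hsw' hprod' htr'
  by_cases h2 : M = 2
  · have hc2 : Fintype.card β = 2 := by rw [hcard, h2]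
    have heql : l = l' := by
      apply List.ext_getElem hlen
      intro i hi hi'
      exact swap_unique hc2 (hsw _ (List.getElem_mem hi)) (hsw' _ (List.getElem_mem hi'))
    rw [heql]
    exact Heq.refl _
  · have h3 : 3 ≤ Fintype.card β := by rw [hcard]; omega
    have hne : Nonempty β := Fintype.card_pos_iff.1 (by omega)
    obtain ⟨P⟩ := hne
    obtain ⟨a, L, haP, hheqL, hL⟩ := core P h3 _ l hsw hprod htr rfl
    obtain ⟨a', L', haP', hheqL', hL'⟩ := core P h3 _ l' hsw' hprod' htr' rfl
    have hLfix : ∀ z ∈ L, z P = P := fun z hz => (hL z hz).2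
    have hL'fix : ∀ z ∈ L', z P = P := fun z hz => (hL' z hz).2
    have hTrL : ∀ u v : β, u ≠ P → v ≠ P → ∃ w ∈ Subgroup.closure (ent L), w u = v :=
      compl_trans haP L hLfix (hheqL.transfer htr)
    have hTrL' : ∀ u v : β, u ≠ P → v ≠ P → ∃ w ∈ Subgroup.closure (ent L'), w u = v :=
      compl_trans haP' L' hL'fix (hheqL'.transfer htr')
    obtain ⟨w, hwL, hwa⟩ := hTrL a a' haP haP'
    have hwP : w P = P := closure_fix hLfix w hwL
    have hxx : Equiv.swap a P * Equiv.swap a P = 1 := Equiv.swap_mul_self a P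
    have hconj : Heq (Equiv.swap a P :: Equiv.swap a P :: L)
        (Equiv.swap a' P :: Equiv.swap a' P :: L) := by
      have h0 := heq_conj_pair L hwL (Equiv.swap a P) hxx
      rwa [swap_conj, hwP, hwa] at h0
    have hLprod : L.prod = 1 := by
      have h1 := hheqL.prod
      rw [hprod, List.prod_cons, List.prod_cons, ← mul_assoc, hxx, one_mul] at h1
      exact h1.symm
    have hL'prod : L'.prod = 1 := by
      have h1 := hheqL'.prod
      rw [hprod', List.prod_cons, List.prod_cons, ← mul_assoc,
        Equiv.swap_mul_self a' P, one_mul] at h1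
      exact h1.symm
    have hcardβ : Fintype.card {x : β // x ≠ P} = M - 1 := by
      rw [card_compl_point, hcard]
    have hlenL : L.length = L'.length := by
      have e1 := hheqL.length
      have e2 := hheqL'.length
      simp only [List.length_cons] at e1 e2
      omega
    have hres : Heq (res P L hLfix) (res P L' hL'fix) := by
      apply IH (M - 1) (by omega) {x : β // x ≠ P} _ inferInstance hcardβ (by omega)
      · simp only [res, List.length_pmap]
        exact hlenL
      · intro g hg
        obtain ⟨σ, hσ, rfl⟩ := List.mem_pmap.1 hg
        exact res_isSwap P (hLfix σ hσ) ((hL σ hσ).1)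
      · exact prod_res P hLfix hLprod
      · exact trans_res P hLfix hTrL
      · intro g hg
        obtain ⟨σ, hσ, rfl⟩ := List.mem_pmap.1 hg
        exact res_isSwap P (hL'fix σ hσ) ((hL' σ hσ).1)
      · exact prod_res P hL'fix hL'prod
      · exact trans_res P hL'fix hTrL'
    have hLL' : Heq L L' := by
      have h0 := hres.map (Equiv.Perm.ofSubtype : Perm {x : β // x ≠ P} →* Perm β)
      rwa [map_ofSubtype_res, map_ofSubtype_res] at h0
    refine hheqL.trans (hconj.trans ?_)
    refine Heq.trans ?_ hheqL'.symm
    exact (hLL'.cons _).cons _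

end Perm

section Bridge

variable {b : ℕ}

/-- view a list as a tuple -/
def F (l : List G) (b : ℕ) : Fin b → G := fun i => l.getD i 1

lemma lm_isHurwitzMove {l l' : List G} (h : LM l l') :
    ∀ {b : ℕ}, l.length = b → l'.length = b → IsHurwitzMove (F l b) (F l' b) := by
  induction h with
  | head x y t =>
      intro b hb hb'
      simp only [List.length_cons] at hb
      refine ⟨0, by omega, ?_, ?_, ?_⟩
      · show (x * y * x⁻¹ :: x :: t).getD 0 1 =
          (x :: y :: t).getD 0 1 * (x :: y :: t).getD 1 1 * ((x :: y :: t).getD 0 1)⁻¹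
        simp [List.getD_cons_zero, List.getD_cons_succ]
      · show (x * y * x⁻¹ :: x :: t).getD 1 1 = (x :: y :: t).getD 0 1
        simp [List.getD_cons_zero, List.getD_cons_succ]
      · intro j hj0 hj1
        obtain ⟨m, hm⟩ : ∃ m, (j : ℕ) = m + 2 := ⟨(j : ℕ) - 2, by omega⟩
        show (x * y * x⁻¹ :: x :: t).getD j 1 = (x :: y :: t).getD j 1
        rw [hm, List.getD_cons_succ, List.getD_cons_succ, List.getD_cons_succ,
          List.getD_cons_succ]
  | @cons a t t' ht ih =>
      intro b hb hb'
      simp only [List.length_cons] at hb hb'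
      have htlen : t'.length = t.length := ht.length.symm
      obtain ⟨i, hi, h1, h2, h3⟩ := ih (b := t.length) rfl htlen
      refine ⟨i + 1, by omega, ?_, ?_, ?_⟩
      · show (a :: t').getD (i + 1) 1 =
          (a :: t).getD (i + 1) 1 * (a :: t).getD (i + 1 + 1) 1 * ((a :: t).getD (i + 1) 1)⁻¹
        rw [List.getD_cons_succ, List.getD_cons_succ, List.getD_cons_succ]
        exact h1
      · show (a :: t').getD (i + 1 + 1) 1 = (a :: t).getD (i + 1) 1
        rw [List.getD_cons_succ, List.getD_cons_succ]
        exact h2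
      · intro j hj0 hj1
        show (a :: t').getD j 1 = (a :: t).getD j 1
        rcases Nat.eq_zero_or_pos (j : ℕ) with hj | hj
        · rw [hj]
          simp [List.getD_cons_zero]
        · obtain ⟨m, hm⟩ : ∃ m, (j : ℕ) = m + 1 := ⟨(j : ℕ) - 1, by omega⟩
          have hmt : m < t.length := by
            have := j.isLt
            omega
          have := h3 ⟨m, hmt⟩ (by simpa using fun h => hj0 (by simp [hm, h]))
            (by simpa using fun h => hj1 (by simp [hm, h]))
          rw [hm, List.getD_cons_succ, List.getD_cons_succ]
          exact this
  -- end

lemma heq_hurwitz {l l' : List G} (h : Heq l l') :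
    ∀ {b : ℕ}, l.length = b → l'.length = b →
      Relation.EqvGen IsHurwitzMove (F l b) (F l' b) := by
  induction h with
  | rel x y hxy =>
      intro b hb hb'
      exact Relation.EqvGen.rel _ _ (lm_isHurwitzMove hxy hb hb')
  | refl x =>
      intro b hb hb'
      exact Relation.EqvGen.refl _
  | symm x y hxy ih =>
      intro b hb hb'
      exact Relation.EqvGen.symm _ _ (ih hb' hb)
  | trans x y z h1 h2 ih1 ih2 =>
      intro b hb hb'
      have hy : y.length = b := (Heq.length h1).symm.trans hb
      exact Relation.EqvGen.trans _ _ _ (ih1 hb hy) (ih2 hy hb')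

lemma F_ofFn (τ : Fin b → G) : F (List.ofFn τ) b = τ := by
  funext i
  show (List.ofFn τ).getD i 1 = τ i
  have hi : (i : ℕ) < (List.ofFn τ).length := by
    rw [List.length_ofFn]
    exact i.isLt
  rw [List.getD_eq_getElem _ _ hi, List.getElem_ofFn]

end Bridge

end HurwitzProof

/-- Any two `b`-tuples of transpositions in `Equiv.Perm (Fin n)` (`n ≥ 2`, `b ≥ 1`)
whose ordered product is the identity and which generate a subgroup acting transitively
on `Fin n` are Hurwitz equivalent. -/
theorem stmt_0 (n b : ℕ) (hn : 2 ≤ n) (hb : 1 ≤ b)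
    (τ τ' : Fin b → Equiv.Perm (Fin n))
    (hswap : ∀ i, (τ i).IsSwap) (hswap' : ∀ i, (τ' i).IsSwap)
    (hprod : (List.ofFn τ).prod = 1) (hprod' : (List.ofFn τ').prod = 1)
    (htrans : ∀ x y : Fin n, ∃ σ ∈ Subgroup.closure (Set.range τ), σ x = y)
    (htrans' : ∀ x y : Fin n, ∃ σ ∈ Subgroup.closure (Set.range τ'), σ x = y) :
    HurwitzEquivalent τ τ' := by
  classical
  have hl : (List.ofFn τ).length = b := List.length_ofFn (f := τ)
  have hl' : (List.ofFn τ').length = b := List.length_ofFn (f := τ')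
  have hent : HurwitzProof.ent (List.ofFn τ) = Set.range τ := by
    ext g
    simp [HurwitzProof.ent, List.mem_ofFn]
  have hent' : HurwitzProof.ent (List.ofFn τ') = Set.range τ' := by
    ext g
    simp [HurwitzProof.ent, List.mem_ofFn]
  have hmain := HurwitzProof.main n (Fin n) inferInstance inferInstance
    (Fintype.card_fin n) hn (List.ofFn τ) (List.ofFn τ') (by rw [hl, hl'])
    (by
      intro x hx
      rw [List.mem_ofFn] at hx
      obtain ⟨i, rfl⟩ := hx
      exact hswap i)
    hprod
    (by rw [hent]; exact htrans)
    (by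
      intro x hx
      rw [List.mem_ofFn] at hx
      obtain ⟨i, rfl⟩ := hx
      exact hswap' i)
    hprod'
    (by rw [hent']; exact htrans')
  have hfin := HurwitzProof.heq_hurwitz hmain hl hl'
  rwa [HurwitzProof.F_ofFn, HurwitzProof.F_ofFn] at hfin
end

section
/- Let A = ℂ[X] be the polynomial ring and B = A[Y]/(Y² − X). Then the first André–Quillen homology (the first homology of the cotangent complex) H¹Cotangent of B over A vanishes; that is, Algebra.H1Cotangent A B is a subsingleton. -/
open Polynomial

namespace AuxStmt7

noncomputable section

abbrev A : Type := Polynomial ℂ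

/-- The defining polynomial `Y² − X` in `A[Y]`. -/
abbrev f : Polynomial A := X ^ 2 - C X

abbrev B : Type := Polynomial A ⧸ Ideal.span {f}

lemma f_monic : f.Monic := by
  have : (X ^ 2 - C (X : A)).natDegree = 2 := by
    compute_degree!
  unfold Polynomial.Monic
  rw [Polynomial.leadingCoeff, this]
  simp [coeff_X_pow]

lemma f_natDegree : f.natDegree = 2 := by compute_degree!

lemma f_irreducible : Irreducible f := by
  have hprime : (Ideal.span {(X : A)}).IsPrime :=
    (Ideal.span_singleton_prime X_ne_zero).mpr Polynomial.prime_X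
  have hE : f.IsEisensteinAt (Ideal.span {(X : A)}) := by
    constructor
    · rw [f_monic.leadingCoeff]
      rw [Ideal.mem_span_singleton]
      intro h
      exact Polynomial.not_isUnit_X (isUnit_of_dvd_one h)
    · intro n hn
      rw [f_natDegree] at hn
      interval_cases n <;>
        simp [coeff_X_pow, Ideal.mem_span_singleton]
    · rw [Ideal.span_singleton_pow, Ideal.mem_span_singleton]
      simp only [coeff_sub, coeff_X_pow, coeff_C_zero]
      intro h
      have := Polynomial.natDegree_le_of_dvd h (by simp)
      simp at this
  exact hE.irreducible hprime f_monic.isPrimitive (by rw [f_natDegree]; norm_num)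

lemma f_prime : Prime f :=
  (UniqueFactorizationMonoid.irreducible_iff_prime).mp f_irreducible

instance : (Ideal.span {f}).IsPrime :=
  (Ideal.span_singleton_prime f_prime.ne_zero).mpr f_prime

instance : IsDomain B := by
  delta B
  infer_instance

/-- `f` does not divide nonzero polynomials of degree `< 2`. -/
lemma not_dvd_of_natDegree_lt {q : Polynomial A} (hq : q ≠ 0) (h : q.natDegree < 2)
    (hdvd : f ∣ q) : False := by
  have := Polynomial.natDegree_le_of_dvd hdvd hq
  rw [f_natDegree] at this
  omega

lemma mk_X_ne_zero : (Ideal.Quotient.mk (Ideal.span {f}) X : B) ≠ 0 := by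
  rw [Ne, Ideal.Quotient.eq_zero_iff_mem, Ideal.mem_span_singleton]
  intro h
  exact not_dvd_of_natDegree_lt X_ne_zero (by simp) h

lemma two_ne_zero_B : (2 : B) ≠ 0 := by
  have : (2 : B) = Ideal.Quotient.mk (Ideal.span {f}) 2 := by rfl
  rw [this, Ne, Ideal.Quotient.eq_zero_iff_mem, Ideal.mem_span_singleton]
  intro h
  exact not_dvd_of_natDegree_lt (by norm_num) (by simp) h

/-- The evaluation sending the single variable to the class of `X`. -/
abbrev val : Unit → B := fun _ => Ideal.Quotient.mk (Ideal.span {f}) X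

/-- the equivalence `A[unit] ≃ A[Y]` -/
abbrev e : MvPolynomial Unit A ≃ₐ[A] Polynomial A := MvPolynomial.pUnitAlgEquiv A

lemma e_apply (p : MvPolynomial Unit A) : e p = MvPolynomial.eval₂ C (fun _ => X) p := rfl

lemma aeval_val_eq (q : MvPolynomial Unit A) :
    MvPolynomial.aeval val q = Ideal.Quotient.mk (Ideal.span {f}) (e q) := by
  have : (MvPolynomial.aeval val : MvPolynomial Unit A →ₐ[A] B) =
      (Ideal.Quotient.mkₐ A (Ideal.span {f})).comp (e : MvPolynomial Unit A →ₐ[A] Polynomial A) := by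
    apply MvPolynomial.algHom_ext
    intro i
    simp [e_apply]
  exact DFunLike.congr_fun this q

lemma aeval_val_surjective : Function.Surjective (MvPolynomial.aeval val (R := A)) := by
  intro b
  obtain ⟨p, rfl⟩ := Ideal.Quotient.mk_surjective b
  exact ⟨e.symm p, by rw [aeval_val_eq, AlgEquiv.apply_symm_apply]⟩

/-- The one-variable presentation of `B` over `A`. -/
def P : Algebra.Generators A B Unit :=
  Algebra.Generators.ofSurjective val aeval_val_surjective

/-- the relation in `MvPolynomial Unit A` -/
abbrev g : MvPolynomial Unit A := MvPolynomial.X () ^ 2 - MvPolynomial.C X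

lemma e_g : e g = f := by
  simp [e_apply]

lemma mem_ker_iff (q : MvPolynomial Unit A) : q ∈ P.ker ↔ g ∣ q := by
  rw [Algebra.Generators.ker_eq_ker_aeval_val, RingHom.mem_ker]
  show MvPolynomial.aeval val q = 0 ↔ _
  rw [aeval_val_eq, Ideal.Quotient.eq_zero_iff_mem, Ideal.mem_span_singleton]
  constructor
  · intro h
    have : e.symm f ∣ e.symm (e q) := map_dvd e.symm h
    rwa [e.symm_apply_apply, ← e_g, e.symm_apply_apply] at this
  · intro h
    have := map_dvd e h
    rwa [e_g] at this

lemma g_mem_ker : g ∈ P.ker := (mem_ker_iff g).mpr dvd_rfl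

lemma pderiv_g : MvPolynomial.pderiv () g = 2 * MvPolynomial.X () := by
  simp [g]

lemma cotangentComplex_injective : Function.Injective P.toExtension.cotangentComplex := by
  rw [injective_iff_map_eq_zero]
  intro z hz
  obtain ⟨x, rfl⟩ := Algebra.Extension.Cotangent.mk_surjective z
  obtain ⟨p, hp⟩ := (mem_ker_iff x.1).mp x.2
  rw [Algebra.Extension.cotangentComplex_mk] at hz
  -- take the coordinate of the basis
  have h0 : MvPolynomial.aeval val (MvPolynomial.pderiv () x.1) = 0 := by
    have h := congrArg (fun w => P.cotangentSpaceBasis.repr w ()) hz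
    simp only [LinearEquiv.map_zero, Finsupp.coe_zero, Pi.zero_apply] at h
    rwa [Algebra.Generators.cotangentSpaceBasis_repr_one_tmul] at h
  rw [hp] at h0
  rw [MvPolynomial.pderiv_mul, map_add, map_mul, map_mul] at h0
  have hg0 : MvPolynomial.aeval val g = 0 := by
    rw [aeval_val_eq, e_g, Ideal.Quotient.eq_zero_iff_mem]
    exact Ideal.mem_span_singleton_self f
  have h2X : MvPolynomial.aeval val (MvPolynomial.pderiv () g) =
      2 * Ideal.Quotient.mk (Ideal.span {f}) X := by
    rw [pderiv_g]; simp
  have h1 : (2 * Ideal.Quotient.mk (Ideal.span {f}) X) *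
      MvPolynomial.aeval val p = (0 : B) := by
    rw [← h2X]
    linear_combination h0 - MvPolynomial.aeval val (MvPolynomial.pderiv () p) * hg0
  rcases (mul_eq_zero (M₀ := B)).mp h1 with h | hpval
  · rcases (mul_eq_zero (M₀ := B)).mp h with h | h
    · exact absurd h two_ne_zero_B
    · exact absurd h mk_X_ne_zero
  · -- `p` is in the kernel, so `x = g * p ∈ ker ^ 2`
    have hpker : p ∈ P.ker := by
      rw [Algebra.Generators.ker_eq_ker_aeval_val, RingHom.mem_ker]
      exact hpval
    have hx2 : x.1 ∈ P.ker ^ 2 := by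
      rw [hp, pow_two]
      exact Ideal.mul_mem_mul g_mem_ker hpker
    apply Algebra.Extension.Cotangent.ext
    rw [Algebra.Extension.Cotangent.val_mk, Algebra.Extension.Cotangent.val_zero,
      Ideal.toCotangent_eq_zero]
    exact hx2

end

end AuxStmt7

/-- For `A = ℂ[X]` and `B = A[Y]/(Y² − X)` (the local model of a simple ramification
point), the first André–Quillen homology `H¹(L_{B/A})` of the cotangent complex
vanishes: deformations are unobstructed. -/
theorem stmt_7 :
    Subsingleton
      (Algebra.H1Cotangent (Polynomial ℂ)
        (Polynomial (Polynomial ℂ) ⧸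
          Ideal.span {(X : Polynomial (Polynomial ℂ)) ^ 2 - C (X : Polynomial ℂ)})) := by
  have h1 : Subsingleton AuxStmt7.P.toExtension.H1Cotangent :=
    (Algebra.Extension.subsingleton_h1Cotangent _).mpr AuxStmt7.cotangentComplex_injective
  exact AuxStmt7.P.equivH1Cotangent.symm.toEquiv.subsingleton
end
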